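/- Suppose a chord diagram D contains an arc A, disjoint from the rest of the configuration structure, and β is a chord with both endpoints in A, fixed by the reflection involution i of A with i(D)=D. Smooth D at β (the component-increasing smoothing, which is valid since β is even). Then the new unicursal component produced (the one whose endpoints/arcs lie within A on one side of β) shares an even number of vertices with every other unicursal component of the result. Consequently the graph Γ of the smoothed diagram has an isolated vertex and is disconnected (when there is more than one component), so I of such a summand vanishes. -/

import Mathlib

/-!
Since the reflection of `A` fixes `β`, the endpoints of `β` sit symmetrically in `A`, so the
open interval `S` between them has the parity of `A` itself minus two. Every point of `A` is a
chord endpoint and `A` carries an even number of them, so `|S|` is even. Counting the points of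
`S` chord by chord, a chord with both endpoints in `S` contributes two and a chord crossing the
boundary of `S` contributes one; hence the crossing chords, which are exactly the vertices
shared by the two components of the smoothing, are even in number, and the inner component is
an isolated vertex of `Γ`.
-/

/-- Two chords `c = {c.1, c.2}` and `d = {d.1, d.2}` (each written with smaller
endpoint first) of a chord diagram are *linked* (interleaved) iff the endpoints
of one separate the endpoints of the other on the circle. -/
def Linked (c d : ℕ × ℕ) : Prop :=
  (c.1 < d.1 ∧ d.1 < c.2 ∧ c.2 < d.2) ∨ (d.1 < c.1 ∧ c.1 < d.2 ∧ d.2 < c.2)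

instance : DecidableRel Linked := fun c d => by unfold Linked; infer_instance

/-- A chord diagram on the `N` points `0, …, N-1` of a circle: a finite set of
chords, each recorded as an ordered pair (smaller endpoint, larger endpoint),
forming a perfect matching of `{0, …, N-1}`. -/
structure IsChordDiagram (N : ℕ) (D : Finset (ℕ × ℕ)) : Prop where
  lt : ∀ c ∈ D, c.1 < c.2 ∧ c.2 < N
  matching : ∀ x < N, ∃! c, c ∈ D ∧ (c.1 = x ∨ c.2 = x)

/-- `x` lies in (the set of points of) the configuration `C`, a finite set of
arcs of the circle, each arc recorded as the interval of points `[A.1, A.2]`. -/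
def InConfig (C : Finset (ℕ × ℕ)) (x : ℕ) : Prop :=
  ∃ A ∈ C, A.1 ≤ x ∧ x ≤ A.2

instance (C : Finset (ℕ × ℕ)) : DecidablePred (InConfig C) := fun x => by
  unfold InConfig; infer_instance

/-- The reflection involution of the configuration `C`: reflects each arc of
`C` along its radius and fixes all points outside the arcs. -/
noncomputable def reflectPt (C : Finset (ℕ × ℕ)) (x : ℕ) : ℕ :=
  ((C.toList.find? fun A => A.1 ≤ x && x ≤ A.2).map fun A => A.1 + A.2 - x).getD x

/-- Rewrite a pair of points as a chord (smaller endpoint first). -/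
def sortPair (p : ℕ × ℕ) : ℕ × ℕ := (min p.1 p.2, max p.1 p.2)

/-- The image of a chord under the reflection involution of the configuration. -/
noncomputable def reflectChord (C : Finset (ℕ × ℕ)) (c : ℕ × ℕ) : ℕ × ℕ :=
  sortPair (reflectPt C c.1, reflectPt C c.2)

/-- An even symmetric configuration `C` on the chord diagram `D` (on `N`
points): a finite family of pairwise disjoint arcs of the circle such that
each arc contains an even number of chord endpoints, every chord with one
endpoint in the arcs has both endpoints in the arcs, and the reflection
involution `i` of the arcs maps the chord diagram to itself, `i(D) = D`. -/
structure EvenSymConfig (N : ℕ) (D : Finset (ℕ × ℕ)) (C : Finset (ℕ × ℕ)) : Prop where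
  arcs : ∀ A ∈ C, A.1 ≤ A.2 ∧ A.2 < N
  disj : ∀ A ∈ C, ∀ B ∈ C, A ≠ B → A.2 < B.1 ∨ B.2 < A.1
  even : ∀ A ∈ C,
    Even (((D.biUnion fun c => ({c.1, c.2} : Finset ℕ)).filter
      fun x => A.1 ≤ x ∧ x ≤ A.2).card)
  closed : ∀ c ∈ D, (InConfig C c.1 ↔ InConfig C c.2)
  symm : ∀ c ∈ D, reflectChord C c ∈ D

/-- The graph `Γ(L)` of a framed 4-valent graph `L`, encoded as a Gauss diagram
on `k` circles: points of the circles are natural numbers, `circleOf` assigns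
each point to its circle (unicursal component), and `D` is the set of chords
(each chord an unordered pair of points, recorded as an ordered pair).  The
vertices of `Γ` are the `k` components, and two distinct components are
adjacent iff they share an odd number of chords (intersection points). -/
def gammaGraph (k : ℕ) (circleOf : ℕ → Fin k) (D : Finset (ℕ × ℕ)) :
    SimpleGraph (Fin k) where
  Adj i j := i ≠ j ∧ Odd ((D.filter fun c =>
      (circleOf c.1 = i ∧ circleOf c.2 = j) ∨
      (circleOf c.1 = j ∧ circleOf c.2 = i)).card)
  symm := by
    constructor
    intro i j hij
    refine ⟨hij.1.symm, ?_⟩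
    have heq : (D.filter fun c =>
        (circleOf c.1 = i ∧ circleOf c.2 = j) ∨
        (circleOf c.1 = j ∧ circleOf c.2 = i)) =
      (D.filter fun c =>
        (circleOf c.1 = j ∧ circleOf c.2 = i) ∨
        (circleOf c.1 = i ∧ circleOf c.2 = j)) := by
      apply Finset.filter_congr
      intro c _
      tauto
    rw [← heq]
    exact hij.2
  loopless := ⟨fun i hi => hi.1 rfl⟩

open Finset

def crossingChords (D : Finset (ℕ × ℕ)) (S : Finset ℕ) : Finset (ℕ × ℕ) :=
  D.filter fun c => (c.1 ∈ S ∧ c.2 ∉ S) ∨ (c.1 ∉ S ∧ c.2 ∈ S)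

def innerChords (D : Finset (ℕ × ℕ)) (S : Finset ℕ) : Finset (ℕ × ℕ) :=
  D.filter fun c => c.1 ∈ S ∧ c.2 ∈ S

lemma card_filter_mem_pair {a b : ℕ} (hab : a ≠ b) (S : Finset ℕ) :
    #(({a, b} : Finset ℕ).filter (· ∈ S)) =
      2 * (if a ∈ S ∧ b ∈ S then 1 else 0) +
        if (a ∈ S ∧ b ∉ S) ∨ (a ∉ S ∧ b ∈ S) then 1 else 0 := by
  by_cases ha : a ∈ S <;> by_cases hb : b ∈ S <;>
    simp [filter_insert, filter_singleton, ha, hb, hab]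

namespace IsChordDiagram

variable {N : ℕ} {D : Finset (ℕ × ℕ)}

lemma biUnion_endpoints (hD : IsChordDiagram N D) :
    D.biUnion (fun c => ({c.1, c.2} : Finset ℕ)) = range N := by
  ext x
  simp only [mem_biUnion, mem_insert, mem_singleton, mem_range]
  constructor
  · rintro ⟨c, hc, rfl | rfl⟩ <;> have := hD.lt c hc <;> omega
  · intro hx
    obtain ⟨c, ⟨hc, hcx⟩, -⟩ := hD.matching x hx
    exact ⟨c, hc, by omega⟩

lemma pairwiseDisjoint_endpoints (hD : IsChordDiagram N D) :
    (D : Set (ℕ × ℕ)).PairwiseDisjoint fun c => ({c.1, c.2} : Finset ℕ) := by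
  intro c hc d hd hcd
  refine disjoint_left.2 fun x hxc hxd => hcd ?_
  simp only [mem_insert, mem_singleton] at hxc hxd
  have hx : x < N := by have := hD.lt c hc; omega
  exact (hD.matching x hx).unique ⟨hc, by omega⟩ ⟨hd, by omega⟩

lemma card_eq_two_mul_card_innerChords_add_card_crossingChords (hD : IsChordDiagram N D)
    {S : Finset ℕ} (hS : S ⊆ range N) :
    #S = 2 * #(innerChords D S) + #(crossingChords D S) := by
  have hSD : S = D.biUnion fun c => ({c.1, c.2} : Finset ℕ).filter (· ∈ S) := by
    rw [← filter_biUnion, hD.biUnion_endpoints, filter_mem_eq_inter, inter_eq_right.2 hS]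
  calc #S = ∑ c ∈ D, #(({c.1, c.2} : Finset ℕ).filter (· ∈ S)) := by
        conv_lhs => rw [hSD]
        exact card_biUnion (hD.pairwiseDisjoint_endpoints.mono fun c => filter_subset _ _)
    _ = 2 * #(innerChords D S) + #(crossingChords D S) := by
        rw [innerChords, crossingChords, card_filter, card_filter, mul_sum, ← sum_add_distrib]
        exact sum_congr rfl fun c hc => card_filter_mem_pair (hD.lt c hc).1.ne S

lemma even_card_crossingChords_iff (hD : IsChordDiagram N D) {S : Finset ℕ}
    (hS : S ⊆ range N) : Even #(crossingChords D S) ↔ Even #S := by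
  rw [hD.card_eq_two_mul_card_innerChords_add_card_crossingChords hS]
  simp [Nat.even_add]

end IsChordDiagram

section Reflection

variable {C : Finset (ℕ × ℕ)}

lemma reflectPt_of_mem (hC : ∀ A ∈ C, ∀ B ∈ C, A ≠ B → A.2 < B.1 ∨ B.2 < A.1)
    {A : ℕ × ℕ} (hA : A ∈ C) {x : ℕ} (hx : A.1 ≤ x ∧ x ≤ A.2) :
    reflectPt C x = A.1 + A.2 - x := by
  unfold reflectPt
  cases hf : C.toList.find? (fun B => B.1 ≤ x && x ≤ B.2) with
  | none =>
    have := List.find?_eq_none.1 hf A (mem_toList.2 hA)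
    simp [hx] at this
  | some B =>
    have hB : B ∈ C := mem_toList.1 (List.mem_of_find?_eq_some hf)
    have hxB : B.1 ≤ x ∧ x ≤ B.2 := by simpa using List.find?_some hf
    obtain rfl : B = A := by
      by_contra hne
      rcases hC B hB A hA hne with h | h <;> omega
    rfl

lemma fst_add_snd_of_reflectChord_eq_self
    (hC : ∀ A ∈ C, ∀ B ∈ C, A ≠ B → A.2 < B.1 ∨ B.2 < A.1) {A : ℕ × ℕ} (hA : A ∈ C)
    {β : ℕ × ℕ} (hβA : A.1 ≤ β.1 ∧ β.2 ≤ A.2) (hβ : β.1 ≤ β.2)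
    (hfix : reflectChord C β = β) : β.1 + β.2 = A.1 + A.2 := by
  rw [reflectChord, sortPair, reflectPt_of_mem hC hA ⟨hβA.1, by omega⟩,
    reflectPt_of_mem hC hA ⟨by omega, hβA.2⟩, Prod.ext_iff] at hfix
  simp only at hfix
  omega

end Reflection

lemma EvenSymConfig.even_arc_length {N : ℕ} {D C : Finset (ℕ × ℕ)} (hD : IsChordDiagram N D)
    (h : EvenSymConfig N D C) {A : ℕ × ℕ} (hA : A ∈ C) : Even (A.2 + 1 - A.1) := by
  have hAN := (h.arcs A hA).2
  have hArc : (range N).filter (fun x => A.1 ≤ x ∧ x ≤ A.2) = Icc A.1 A.2 := by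
    ext x; simp only [mem_filter, mem_range, mem_Icc]; omega
  simpa [hD.biUnion_endpoints, hArc] using h.even A hA

lemma gammaGraph_isIsolated {k : ℕ} {circleOf : ℕ → Fin k} {D : Finset (ℕ × ℕ)}
    {i : Fin k}
    (h : ∀ j ≠ i, Even #(D.filter fun c =>
      (circleOf c.1 = i ∧ circleOf c.2 = j) ∨ (circleOf c.1 = j ∧ circleOf c.2 = i))) :
    (gammaGraph k circleOf D).IsIsolated i :=
  fun j hij => Nat.not_odd_iff_even.2 (h j hij.1.symm) hij.2

/-- Let `β` be a chord of the diagram `D` lying inside an arc `A` of an even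
symmetric configuration and fixed by the reflection involution `i` of the
configuration.  Smoothing `D` at `β` in the component-increasing way splits the
circle into two components, one of which consists of the points strictly
between the endpoints of `β`.  That new component shares an even number of
vertices (chords) with the other unicursal component — i.e. the number of
chords of `D` with exactly one endpoint strictly between `β.1` and `β.2` is
even — and consequently the graph `Γ` of the smoothed diagram (on the two
components) has an isolated vertex and is disconnected. -/
theorem stmt_18 (N : ℕ) (D C : Finset (ℕ × ℕ)) (hD : IsChordDiagram N D)
    (h : EvenSymConfig N D C) (A : ℕ × ℕ) (hA : A ∈ C)
    (β : ℕ × ℕ) (hβ : β ∈ D) (hβA : A.1 ≤ β.1 ∧ β.2 ≤ A.2)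
    (hfix : reflectChord C β = β) :
    Even ((D.filter fun c =>
      ((β.1 < c.1 ∧ c.1 < β.2) ∧ ¬ (β.1 < c.2 ∧ c.2 < β.2)) ∨
      (¬ (β.1 < c.1 ∧ c.1 < β.2) ∧ (β.1 < c.2 ∧ c.2 < β.2))).card) ∧
    ¬ (gammaGraph 2 (fun x => if β.1 < x ∧ x < β.2 then 0 else 1)
        (D.erase β)).Connected := by
  obtain ⟨hβ12, hβN⟩ := hD.lt β hβ
  have hsum := fst_add_snd_of_reflectChord_eq_self h.disj hA hβA hβ12.le hfix
  have hArc := h.even_arc_length hD hA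
  have hIoo : Even #(Ioo β.1 β.2) := by
    rw [Nat.card_Ioo]; rw [Nat.even_iff] at hArc ⊢; omega
  have hS : Ioo β.1 β.2 ⊆ range N := fun x hx => by
    simp only [mem_Ioo, mem_range] at hx ⊢; omega
  have hcross : Even #(crossingChords D (Ioo β.1 β.2)) :=
    (hD.even_card_crossingChords_iff hS).2 hIoo
  simp only [crossingChords, mem_Ioo] at hcross
  refine ⟨hcross, fun hconn => hconn.preconnected.not_isIsolated 0 ?_⟩
  refine gammaGraph_isIsolated fun j hj => ?_
  obtain rfl := Fin.eq_one_of_ne_zero j hj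
  convert hcross using 2
  ext c
  simp only [mem_filter, mem_erase]
  constructor
  · rintro ⟨⟨-, hc⟩, hcj⟩
    refine ⟨hc, ?_⟩
    split_ifs at hcj <;> simp_all
  · rintro ⟨hc, hcj⟩
    refine ⟨⟨by rintro rfl; omega, hc⟩, ?_⟩
    split_ifs <;> simp_all
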